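/- arXiv:1104.4645 — 2 statements merged into one kernel-verified Lean document; each statement's English description precedes it below -/
import Mathlib

section
/- Let a > 0 be a real number, let k ≥ 1 be an integer and let ε be a real number with 0 < ε < 4^{−(k−1)}. Let P' be a finite point of E'_a(ℝ) with x(P') = (1+ε)·√a, and suppose 2^kP' is a finite point. Then log z(2^kP') > −128·4^{2(k−1)}·ε². -/
/-!
Write `x(Q) = (1 + u)·√a`; then `u` is the rescaled `x`-coordinate of the corresponding point
of `E_a`, doubling acts on it by the duplication map `f(u) = (u² - 1)² / (4u(u² + 1))` of
`y² = x³ + x` (`doubleX` below), and `z(Q) = 1 - 8w²` with `w = u / (1 + u)²`.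

Since `f(1/u) = f(u)` and `u + 1/2 ≤ 4 (f(u) + 1/2)`, the orbit `u_j = f^[j](ε)` satisfies
`4^j (u_j + 1/2) ≥ 1/ε + 1/2` for `j ≥ 1`. For `j < k` this keeps `u_j > 0`, so no `2^j P'` is
`2`-torsion, and for `j = k` it gives `w ≤ min(1/4, 2m/(2 + 3m))` with `m = 4^k ε`, whence
`w²(1 + 8m²) < m²` and `log z ≥ 1 - 1/z > -8m² = -128·4^{2(k-1)}·ε²`.
-/

open Filter Real

/-- The translated elliptic curve `E'_a : y² = x³ − 3√a·x² + 4a·x − 2a^{3/2}` over `ℝ`,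
obtained from `E_a : y² = x³ + a·x` via `x ↦ x + √a`. -/
noncomputable def E'curve (a : ℝ) : WeierstrassCurve.Affine ℝ :=
  { a₁ := 0, a₂ := -3 * Real.sqrt a, a₃ := 0, a₄ := 4 * a, a₆ := -2 * a ^ ((3 : ℝ) / 2) }

/-- The x-coordinate of a point (with junk value `0` at the identity `O`). -/
def xc {F : Type*} [Field F] {W : WeierstrassCurve.Affine F} : W.Point → F
  | .zero => 0
  | @WeierstrassCurve.Affine.Point.some _ _ _ x _ _ => x

/-- For a finite point `Q` of `E'_a` with `x(Q) = x`, the quantity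
`z(Q) = 1 − 8a·x⁻² + 16·a^{3/2}·x⁻³ − 8a²·x⁻⁴` from Tate's series. -/
noncomputable def zE' (a x : ℝ) : ℝ :=
  1 - 8 * a / x ^ 2 + 16 * a ^ ((3 : ℝ) / 2) / x ^ 3 - 8 * a ^ 2 / x ^ 4

open WeierstrassCurve.Affine

noncomputable def doubleX (u : ℝ) : ℝ := (u ^ 2 - 1) ^ 2 / (4 * u * (u ^ 2 + 1))

lemma doubleX_nonneg {u : ℝ} (hu : 0 ≤ u) : 0 ≤ doubleX u := by
  unfold doubleX; positivity

lemma doubleX_inv (u : ℝ) : doubleX u⁻¹ = doubleX u := by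
  rcases eq_or_ne u 0 with rfl | hu
  · simp [doubleX]
  unfold doubleX
  field_simp
  ring

lemma add_half_le_four_mul_doubleX_add_half {u : ℝ} (hu : 0 ≤ u) :
    u + 1 / 2 ≤ 4 * (doubleX u + 1 / 2) := by
  rcases hu.eq_or_lt with rfl | hu
  · norm_num [doubleX]
  unfold doubleX
  rw [← sub_nonneg]
  have key : 4 * ((u ^ 2 - 1) ^ 2 / (4 * u * (u ^ 2 + 1)) + 1 / 2) - (u + 1 / 2)
      = (3 * u * (u - 1) ^ 2 + 2) / (2 * (u * (u ^ 2 + 1))) := by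
    field_simp
    ring
  rw [key]
  positivity

lemma doubleX_iterate_nonneg {u : ℝ} (hu : 0 ≤ u) (n : ℕ) : 0 ≤ doubleX^[n] u := by
  induction n with
  | zero => exact hu
  | succ n ih => rw [Function.iterate_succ_apply']; exact doubleX_nonneg ih

lemma inv_add_half_le_four_pow_mul_doubleX_iterate {ε : ℝ} (hε : 0 < ε) (n : ℕ) :
    ε⁻¹ + 1 / 2 ≤ 4 ^ (n + 1) * (doubleX^[n + 1] ε + 1 / 2) := by
  induction n with
  | zero =>
    simpa [← doubleX_inv ε] using add_half_le_four_mul_doubleX_add_half (inv_nonneg.2 hε.le)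
  | succ n ih =>
    rw [Function.iterate_succ_apply' _ (n + 1), pow_succ, mul_assoc]
    exact ih.trans (mul_le_mul_of_nonneg_left
      (add_half_le_four_mul_doubleX_add_half (doubleX_iterate_nonneg hε.le _)) (by positivity))

lemma doubleX_iterate_pos {ε : ℝ} (hε : 0 < ε) {n : ℕ} (hn : ε < ((4 : ℝ) ^ n)⁻¹) {j : ℕ}
    (hj : j ≤ n) : 0 < doubleX^[j] ε := by
  cases j with
  | zero => exact hε
  | succ i =>
    have hbound := inv_add_half_le_four_pow_mul_doubleX_iterate hε i
    have hinv : (4 : ℝ) ^ (i + 1) < ε⁻¹ :=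
      (pow_le_pow_right₀ (by norm_num) hj).trans_lt ((lt_inv_comm₀ hε (by positivity)).1 hn)
    nlinarith [pow_pos (by norm_num : (0 : ℝ) < 4) (i + 1)]

lemma rpow_three_halves {a : ℝ} (ha : 0 ≤ a) : a ^ ((3 : ℝ) / 2) = √a ^ 3 := by
  rw [Real.sqrt_eq_rpow, ← Real.rpow_natCast, ← Real.rpow_mul ha]
  norm_num

namespace E'curve

variable {a : ℝ}

theorem equation_iff (ha : 0 ≤ a) {x y : ℝ} :
    (E'curve a).Equation x y ↔ y ^ 2 = (x - √a) ^ 3 + a * (x - √a) := by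
  rw [WeierstrassCurve.Affine.equation_iff]
  simp only [E'curve, rpow_three_halves ha]
  set s := √a
  rw [← Real.sq_sqrt ha]
  constructor <;> intro h <;> linear_combination h

theorem xc_two_nsmul (ha : 0 < a) {Q : (E'curve a).Point} (hQ : Q ≠ 0) {u : ℝ} (hu : 0 < u)
    (hx : xc Q = (1 + u) * √a) :
    2 • Q ≠ 0 ∧ xc (2 • Q) = (1 + doubleX u) * √a := by
  rcases Q with _ | @⟨x, y, h⟩
  · exact absurd rfl hQ
  change x = _ at hx
  have hy2 : y ^ 2 = √a ^ 3 * (u ^ 3 + u) := by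
    have := (equation_iff ha.le).1 h.1
    rw [hx] at this
    linear_combination this - u * √a * Real.sq_sqrt ha.le
  have hy : y ≠ 0 := by
    rintro rfl
    have : 0 < √a ^ 3 * (u ^ 3 + u) := by positivity
    linarith
  have hyneg : y ≠ (E'curve a).negY x y := by
    simp only [negY, E'curve, zero_mul, sub_zero]
    intro h'; exact hy (by linarith)
  rw [two_nsmul, Point.add_self_of_Y_ne hyneg]
  refine ⟨Point.some_ne_zero _, ?_⟩
  change (E'curve a).addX x x ((E'curve a).slope x x y y) = _
  rw [slope_of_Y_ne rfl hyneg]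
  simp only [addX, negY, E'curve, doubleX, zero_mul, sub_zero, add_zero]
  subst hx
  set s := √a
  rw [← Real.sq_sqrt ha.le]
  field_simp
  linear_combination -(√a * (4 + 24 * u ^ 2 + 36 * u ^ 4)) * hy2

theorem xc_two_pow_nsmul (ha : 0 < a) {P : (E'curve a).Point} (hP : P ≠ 0) {u : ℝ}
    (hx : xc P = (1 + u) * √a) {n : ℕ} (hpos : ∀ j < n, 0 < doubleX^[j] u) :
    2 ^ n • P ≠ 0 ∧ xc (2 ^ n • P) = (1 + doubleX^[n] u) * √a := by
  induction n with
  | zero => simpa using ⟨hP, hx⟩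
  | succ n ih =>
    obtain ⟨hne, hxn⟩ := ih fun j hj => hpos j (hj.trans n.lt_succ_self)
    rw [pow_succ', mul_smul, Function.iterate_succ_apply']
    exact xc_two_nsmul ha hne (hpos n n.lt_succ_self) hxn

theorem zE'_eq (ha : 0 < a) {u : ℝ} (hu : 0 ≤ u) :
    zE' a ((1 + u) * √a) = 1 - 8 * (u / (1 + u) ^ 2) ^ 2 := by
  have hs : 0 < √a := Real.sqrt_pos.2 ha
  rw [zE', rpow_three_halves ha.le]
  set s := √a
  rw [← Real.sq_sqrt ha.le]
  field_simp
  ring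

end E'curve

lemma neg_eight_mul_sq_lt_log {u m : ℝ} (hu : 0 ≤ u) (hm : 0 < m) (h : 1 ≤ m * (u + 1 / 2)) :
    -(8 * m ^ 2) < Real.log (1 - 8 * (u / (1 + u) ^ 2) ^ 2) := by
  set w := u / (1 + u) ^ 2
  have hw0 : 0 ≤ w := by positivity
  have hw_le : w ≤ 1 / 4 := by
    rw [div_le_iff₀ (by positivity)]; nlinarith [sq_nonneg (u - 1)]
  have hw_lt : w * (u + 2) < 1 := by
    rw [div_mul_eq_mul_div, div_lt_one (by positivity)]; nlinarith
  have key : w ^ 2 * (1 + 8 * m ^ 2) < m ^ 2 := by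
    rcases le_or_gt m (1 / 2) with hm' | hm'
    · have hlin : w * (2 + 3 * m) < 2 * m := by nlinarith
      have hsq : (w * (2 + 3 * m)) ^ 2 < (2 * m) ^ 2 :=
        pow_lt_pow_left₀ hlin (by positivity) two_ne_zero
      have hcoef : 4 * (1 + 8 * m ^ 2) ≤ (2 + 3 * m) ^ 2 := by nlinarith
      nlinarith [mul_le_mul_of_nonneg_left hcoef (sq_nonneg w)]
    · have hsq : w ^ 2 ≤ (1 / 4) ^ 2 := pow_le_pow_left₀ hw0 hw_le 2
      nlinarith [mul_le_mul_of_nonneg_right hsq (by positivity : (0 : ℝ) ≤ 1 + 8 * m ^ 2)]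
  have hz : 0 < 1 - 8 * w ^ 2 := by nlinarith
  calc -(8 * m ^ 2) < 1 - (1 - 8 * w ^ 2)⁻¹ := by
        rw [← sub_pos]
        field_simp
        nlinarith
    _ ≤ Real.log (1 - 8 * w ^ 2) := Real.one_sub_inv_le_log_of_pos hz

theorem logz_2kP_lower_bound_eps_general (a : ℝ) (ha : 0 < a) (k : ℕ) (hk : 1 ≤ k)
    (ε : ℝ) (hε0 : 0 < ε) (hε1 : ε < ((4 : ℝ) ^ (k - 1))⁻¹)
    (P' : (E'curve a).Point) (hP' : P' ≠ 0)
    (hx : xc P' = (1 + ε) * Real.sqrt a) :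
    Real.log (zE' a (xc ((2 ^ k) • P'))) > -(128 * (4 : ℝ) ^ (2 * (k - 1)) * ε ^ 2) := by
  obtain ⟨n, rfl⟩ : ∃ n, k = n + 1 := ⟨k - 1, by omega⟩
  rw [add_tsub_cancel_right] at hε1 ⊢
  have hpos : ∀ j < n + 1, 0 < doubleX^[j] ε := fun j hj =>
    doubleX_iterate_pos hε0 hε1 (Nat.lt_succ_iff.1 hj)
  have hu := doubleX_iterate_nonneg hε0.le (n + 1)
  rw [(E'curve.xc_two_pow_nsmul ha hP' hx hpos).2, E'curve.zE'_eq ha hu, gt_iff_lt,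
    show 128 * (4 : ℝ) ^ (2 * n) * ε ^ 2 = 8 * (4 ^ (n + 1) * ε) ^ 2 by ring]
  refine neg_eight_mul_sq_lt_log hu (by positivity) ?_
  have hbound := inv_add_half_le_four_pow_mul_doubleX_iterate hε0 n
  calc (1 : ℝ) ≤ ε * (ε⁻¹ + 1 / 2) := by
        rw [mul_add, mul_inv_cancel₀ hε0.ne']; linarith
    _ ≤ 4 ^ (n + 1) * ε * (doubleX^[n + 1] ε + 1 / 2) := by
        rw [mul_comm _ ε, mul_assoc]; gcongr

/-- Lemma 3.3(d): for `a > 0`, an integer `k ≥ 1` and a real `ε` with `0 < ε < 4^{−(k−1)}`,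
if `P'` is a finite point of `E'_a(ℝ)` with `x(P') = (1+ε)·√a` and `2^kP'` is a finite
point, then `log z(2^kP') > −128·4^{2(k−1)}·ε²`. -/
theorem logz_2kP_lower_bound_eps (a : ℝ) (ha : 0 < a) (k : ℕ) (hk : 1 ≤ k)
    (ε : ℝ) (hε0 : 0 < ε) (hε1 : ε < ((4 : ℝ) ^ (k - 1))⁻¹)
    (P' : (E'curve a).Point) (hP' : P' ≠ 0)
    (hx : xc P' = (1 + ε) * Real.sqrt a)
    (h2k : (2 ^ k) • P' ≠ 0) :
    Real.log (zE' a (xc ((2 ^ k) • P'))) > -(128 * (4 : ℝ) ^ (2 * (k - 1)) * ε ^ 2) :=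
  logz_2kP_lower_bound_eps_general a ha k hk ε hε0 hε1 P' hP' hx
end

section
/- Let a be a nonzero fourth-power-free integer and let P ∈ E_a(ℚ) be a point of infinite order. Write x(P) = A₁/B₁ and x(2P) = A₂/B₂ in lowest terms with A₁, A₂ ∈ ℤ and B₁, B₂ positive integers. If a ≢ 4 (mod 16), or if the 2-adic valuation of the rational number x(P) is not equal to 1, then ord₂(B₂) ≥ ord₂(B₁) + 2. -/
/-!
With `P = (x, y)` and `y² = x (x² + a)`, the duplication formula gives
`x(2P) = (x² - a)² / (4 y²)`, so everything reduces to comparing `ord₂ (x² - a)` with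
`ord₂ y`. When `2 ord₂ x ≠ ord₂ a` the ultrametric inequality gives
`ord₂ (x² ± a) = min (2 ord₂ x) (ord₂ a)`. Otherwise (`ord₂ a ∈ {0, 2}` since `a` is
fourth-power-free) write `x = 2ᵏ u`, `a = 4ᵏ b` with `u` a 2-adic unit and `b` odd; since
`u² ≡ 1 (mod 4)`, the residue of `b` mod 4 decides which of `u² ± b` has valuation exactly 1
and which has valuation at least 2. Whenever the inequality would fail,
`ord₂ (x (x² + a)) = 2 ord₂ y` comes out odd, except when `b ≡ 1 (mod 4)` and `k = 1`,
i.e. `a ≡ 4 (mod 16)` and `ord₂ x = 1`.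
-/

open Filter Real

/-- The elliptic curve `y² = x³ + a·x` over a field. -/
def Ecurve {F : Type*} [Field F] (a : F) : WeierstrassCurve.Affine F :=
  { a₁ := 0, a₂ := 0, a₃ := 0, a₄ := a, a₆ := 0 }

open WeierstrassCurve.Affine WeierstrassCurve.Affine.Point

section PadicVal

variable {p : ℕ} [hp : Fact p.Prime]

lemma padicValInt_num_eq_zero_or_padicValNat_den_eq_zero (q : ℚ) :
    padicValInt p q.num = 0 ∨ padicValNat p q.den = 0 := by
  by_contra! h
  have hnum : p ∣ q.num.natAbs := dvd_of_one_le_padicValNat (Nat.one_le_iff_ne_zero.2 h.1)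
  have hden : p ∣ q.den := dvd_of_one_le_padicValNat (Nat.one_le_iff_ne_zero.2 h.2)
  exact hp.out.ne_one (Nat.eq_one_of_dvd_coprimes q.reduced hnum hden)

lemma padicValNat_den_eq_max (q : ℚ) :
    (padicValNat p q.den : ℤ) = max 0 (-padicValRat p q) := by
  rw [padicValRat_def]
  rcases padicValInt_num_eq_zero_or_padicValNat_den_eq_zero (p := p) q with h | h <;> omega

lemma not_dvd_num_and_not_dvd_den_of_padicValRat_eq_zero {u : ℚ} (hu0 : u ≠ 0)
    (hu : padicValRat p u = 0) : ¬ (p : ℤ) ∣ u.num ∧ ¬ p ∣ u.den := by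
  have hnum : padicValInt p u.num = 0 ∧ padicValNat p u.den = 0 := by
    rw [padicValRat_def] at hu
    rcases padicValInt_num_eq_zero_or_padicValNat_den_eq_zero (p := p) u with h | h <;> omega
  simp only [padicValInt.eq_zero_iff, padicValNat.eq_zero_iff, hp.out.ne_one,
    Rat.num_ne_zero.2 hu0, u.den_ne_zero, false_or] at hnum
  exact hnum

end PadicVal

lemma padicValRat_two_pow (n : ℕ) : padicValRat 2 ((2 : ℚ) ^ n) = n := by
  rw [padicValRat.pow, show (2 : ℚ) = (2 : ℕ) by norm_num, padicValRat.self one_lt_two, mul_one]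

lemma padicValInt_two_eq_one_of_emod_four_eq_two {N : ℤ} (h : N % 4 = 2) :
    padicValInt 2 N = 1 := by
  have h1 := (padicValInt_dvd_iff (p := 2) 1 N).1 (by push_cast; omega)
  have h2 := mt (padicValInt_dvd_iff (p := 2) 2 N).2 (by push_cast; omega)
  omega

lemma two_le_padicValInt_two_of_emod_four_eq_zero {N : ℤ} (hN : N ≠ 0) (h : N % 4 = 0) :
    2 ≤ padicValInt 2 N := by
  have h2 := (padicValInt_dvd_iff (p := 2) 2 N).1 (by push_cast; omega)
  omega

lemma exists_padicValRat_two_sq_add_four_pow_mul {x : ℚ} (hx : x ≠ 0) {k : ℕ}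
    (hk : padicValRat 2 x = k) (b : ℤ) (hsum : x ^ 2 + 4 ^ k * b ≠ 0) :
    ∃ N : ℤ, N ≠ 0 ∧ N % 4 = (1 + b) % 4 ∧
      padicValRat 2 (x ^ 2 + 4 ^ k * b) = 2 * k + padicValInt 2 N := by
  set u := x / 2 ^ k
  have hu : padicValRat 2 u = 0 := by
    rw [padicValRat.div hx (by positivity), padicValRat_two_pow, hk, sub_self]
  obtain ⟨hnum, hden⟩ :=
    not_dvd_num_and_not_dvd_den_of_padicValRat_eq_zero (div_ne_zero hx (by positivity)) hu
  set N := u.num ^ 2 + b * u.den ^ 2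
  have hscale : x ^ 2 + 4 ^ k * b = 4 ^ k * (N / u.den ^ 2) := by
    have hu' : x = 2 ^ k * (u.num / u.den) := by
      rw [Rat.num_div_den, mul_div_cancel₀ x (by positivity)]
    rw [hu', show (4 : ℚ) ^ k = (2 ^ k) ^ 2 by rw [← pow_mul, pow_mul']; norm_num]
    push_cast [N]; field_simp
  have hN : (N : ℚ) ≠ 0 := by
    rintro h; rw [h, zero_div, mul_zero] at hscale; exact hsum hscale
  refine ⟨N, by exact_mod_cast hN, ?_, ?_⟩
  · have hnum' : Odd u.num := Int.not_even_iff_odd.1 (by simpa [even_iff_two_dvd] using hnum)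
    have hden' : Odd (u.den : ℤ) := by
      exact_mod_cast Nat.not_even_iff_odd.1 (by simpa [even_iff_two_dvd] using hden)
    rw [Int.add_emod, Int.mul_emod, Int.sq_mod_four_eq_one_of_odd hnum',
      Int.sq_mod_four_eq_one_of_odd hden']
    omega
  · have hden0 : padicValNat 2 u.den = 0 := padicValNat.eq_zero_of_not_dvd hden
    rw [hscale, show (4 : ℚ) ^ k = 2 ^ (2 * k) by rw [pow_mul]; norm_num,
      padicValRat.mul (by positivity) (div_ne_zero hN (by positivity)),
      padicValRat_two_pow, padicValRat.div hN (by positivity), padicValRat.of_int, padicValRat.pow,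
      padicValRat.of_nat, hden0]
    push_cast; ring

namespace Ecurve

variable {F : Type*} [Field F] {a : F}

lemma equation_iff {x y : F} : (Ecurve a).Equation x y ↔ y ^ 2 = x * (x ^ 2 + a) := by
  rw [WeierstrassCurve.Affine.equation_iff]
  simp only [Ecurve]
  constructor <;> intro h <;> linear_combination h

lemma negY_eq (x y : F) : (Ecurve a).negY x y = -y := by
  simp [Ecurve, negY]

lemma Y_ne_zero_of_two_smul_ne_zero [DecidableEq F] {x y : F} {h : (Ecurve a).Nonsingular x y}
    (h2 : 2 • Point.some _ _ h ≠ 0) : y ≠ 0 := by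
  rintro rfl
  exact h2 (by rw [two_smul]; exact add_self_of_Y_eq (by rw [negY_eq, _root_.neg_zero]))

lemma xc_ne_zero_of_two_smul_ne_zero [DecidableEq F] {Q : (Ecurve a).Point} (h2 : 2 • Q ≠ 0) :
    xc Q ≠ 0 := by
  rcases Q with _ | @⟨x, y, h⟩
  · exact absurd (smul_zero 2) h2
  · rintro (rfl : x = 0)
    have hy := Ecurve.equation_iff.1 h.1
    exact Y_ne_zero_of_two_smul_ne_zero h2 (by simpa using hy)

lemma xc_two_smul [DecidableEq F] {x y : F} (h : (Ecurve a).Nonsingular x y)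
    (h2 : 2 • Point.some _ _ h ≠ 0) :
    xc (2 • Point.some _ _ h) = (x ^ 2 - a) ^ 2 / (4 * y ^ 2) := by
  have hy : y ≠ (Ecurve a).negY x y := fun hy => h2 (by rw [two_smul]; exact add_self_of_Y_eq hy)
  have h2y : 2 * y ≠ 0 := by rw [negY_eq] at hy; intro h0; apply hy; linear_combination h0
  have h20 : (2 : F) ≠ 0 := left_ne_zero_of_mul h2y
  have hy0 : y ≠ 0 := right_ne_zero_of_mul h2y
  have h40 : (4 : F) ≠ 0 := by rw [show (4 : F) = 2 * 2 by norm_num]; exact mul_ne_zero h20 h20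
  rw [two_smul, add_of_Y_ne hy]
  show (Ecurve a).addX x x ((Ecurve a).slope x x y y) = _
  rw [slope_of_Y_ne rfl hy, negY_eq]
  simp only [Ecurve, addX, mul_zero, zero_mul, sub_zero, add_zero, sub_neg_eq_add, ← two_mul]
  field_simp
  linear_combination (-32 * x) * Ecurve.equation_iff.1 h.1

end Ecurve

lemma padicValRat_sq_sub_le_of_balanced {x y : ℚ} (hx : x ≠ 0) {k : ℕ}
    (hk : padicValRat 2 x = k) (hk1 : k ≤ 1) {b : ℤ} (hb : Odd b)
    (hm : x ^ 2 - 4 ^ k * b ≠ 0) (hp : x ^ 2 + 4 ^ k * b ≠ 0)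
    (hy : 2 * padicValRat 2 y = k + padicValRat 2 (x ^ 2 + 4 ^ k * b))
    (hcase : 4 ^ k * b % 16 ≠ 4 ∨ k ≠ 1) :
    padicValRat 2 (x ^ 2 - 4 ^ k * b) ≤ padicValRat 2 y := by
  rw [show x ^ 2 - 4 ^ k * b = x ^ 2 + 4 ^ k * ((-b : ℤ) : ℚ) by push_cast; ring] at hm ⊢
  obtain ⟨Np, hNp0, hNp4, hvp⟩ := exists_padicValRat_two_sq_add_four_pow_mul hx hk b hp
  obtain ⟨Nm, -, hNm4, hvm⟩ := exists_padicValRat_two_sq_add_four_pow_mul hx hk (-b) hm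
  have hb2 := Int.odd_iff.1 hb
  rcases (by omega : b % 4 = 1 ∨ b % 4 = 3) with hb4 | hb4
  · have := padicValInt_two_eq_one_of_emod_four_eq_two (N := Np) (by omega)
    interval_cases k <;> omega
  · have := padicValInt_two_eq_one_of_emod_four_eq_two (N := Nm) (by omega)
    have := two_le_padicValInt_two_of_emod_four_eq_zero hNp0 (by omega)
    omega

lemma exists_odd_eq_four_pow_mul {a : ℤ} (ha : a ≠ 0) {k : ℕ} (hk : padicValInt 2 a = 2 * k) :
    ∃ b : ℤ, Odd b ∧ a = 4 ^ k * b := by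
  obtain ⟨b, hab⟩ := padicValInt_dvd (p := 2) a
  rw [hk, pow_mul] at hab
  refine ⟨b, Int.not_even_iff_odd.1 ?_, by rw [hab]; norm_num⟩
  rintro ⟨c, rfl⟩
  have := (padicValInt_dvd_iff (p := 2) (2 * k + 1) a).1
    ⟨c, by rw [hab, pow_succ _ (2 * k), pow_mul]; ring⟩
  omega

lemma two_mul_padicValRat_sq_sub_le {a : ℤ} (ha : a ≠ 0) (hA : padicValInt 2 a ≤ 3) {x y : ℚ}
    (hx : x ≠ 0) (hm : x ^ 2 - a ≠ 0) (hy : y ^ 2 = x * (x ^ 2 + a)) (hy0 : y ≠ 0)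
    (hcase : a % 16 ≠ 4 ∨ padicValRat 2 x ≠ 1) :
    2 * padicValRat 2 (x ^ 2 - a) ≤ min 0 (padicValRat 2 x) + 2 * padicValRat 2 y := by
  have hp : x ^ 2 + (a : ℚ) ≠ 0 := right_ne_zero_of_mul (hy ▸ pow_ne_zero 2 hy0)
  have hvy : 2 * padicValRat 2 y = padicValRat 2 x + padicValRat 2 (x ^ 2 + a) := by
    rw [← padicValRat.mul hx hp, ← hy, padicValRat.pow]; push_cast; ring
  have haQ : (a : ℚ) ≠ 0 := Int.cast_ne_zero.2 ha
  have hvx2 : padicValRat 2 (x ^ 2) = 2 * padicValRat 2 x := by simp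
  have hva : padicValRat 2 (a : ℚ) = padicValInt 2 a := padicValRat.of_int
  rcases eq_or_ne (2 * padicValRat 2 x) (padicValInt 2 a) with hbal | hgen
  · obtain ⟨k, hk⟩ : ∃ k : ℕ, padicValRat 2 x = k := ⟨(padicValRat 2 x).toNat, by omega⟩
    obtain ⟨b, hb, rfl⟩ := exists_odd_eq_four_pow_mul ha (k := k) (by omega)
    push_cast at hm hp hvy ⊢
    have := padicValRat_sq_sub_le_of_balanced hx hk (by omega) hb hm hp (by rwa [← hk])
      (hcase.imp_right fun h hk1 => h (by rw [hk, hk1, Nat.cast_one]))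
    omega
  · have hvp := padicValRat.add_eq_min hp (pow_ne_zero 2 hx) haQ (by rwa [hvx2, hva])
    have hvm := padicValRat.add_eq_min (by rwa [← sub_eq_add_neg]) (pow_ne_zero 2 hx)
      (neg_ne_zero.2 haQ) (by rwa [hvx2, padicValRat.neg, hva])
    rw [← sub_eq_add_neg, hvx2, padicValRat.neg, hva] at hvm
    rw [hvx2, hva] at hvp
    omega

/-- Lemma 6.1(c): let `a` be a nonzero fourth-power-free integer and `P ∈ E_a(ℚ)` a point
of infinite order; write `x(P) = A₁/B₁` and `x(2P) = A₂/B₂` in lowest terms with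
`B₁, B₂ > 0`. If `a ≢ 4 (mod 16)`, or if the 2-adic valuation of `x(P)` is not `1`, then
`ord₂(B₂) ≥ ord₂(B₁) + 2`. -/
theorem ord_two_B2_vs_B1 (a : ℤ) (ha : a ≠ 0)
    (hfree : ∀ p : ℕ, p.Prime → ¬ ((p : ℤ) ^ 4 ∣ a))
    (P : (Ecurve (a : ℚ)).Point)
    (hP : ∀ n : ℕ, 0 < n → n • P ≠ 0)
    (hcase : a % 16 ≠ 4 ∨ padicValRat 2 (xc P) ≠ 1) :
    padicValNat 2 (xc (2 • P)).den ≥ padicValNat 2 (xc P).den + 2 := by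
  rcases P with _ | @⟨x, y, h⟩
  · exact (hP 1 one_pos (one_smul _ _)).elim
  have h2P : 2 • Point.some _ _ h ≠ 0 := hP 2 two_pos
  have hx : x ≠ 0 := Ecurve.xc_ne_zero_of_two_smul_ne_zero h2P
  have hy0 : y ≠ 0 := Ecurve.Y_ne_zero_of_two_smul_ne_zero h2P
  have hx2P := Ecurve.xc_ne_zero_of_two_smul_ne_zero (Q := 2 • Point.some _ _ h)
    (by rw [smul_smul]; exact hP 4 four_pos)
  rw [Ecurve.xc_two_smul h h2P] at hx2P ⊢
  have hm : x ^ 2 - (a : ℚ) ≠ 0 := by rintro h0; apply hx2P; rw [h0]; ring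
  have hA : padicValInt 2 a ≤ 3 := by
    have := mt (padicValInt_dvd_iff 4 a).2 (hfree 2 Nat.prime_two)
    omega
  have key := two_mul_padicValRat_sq_sub_le ha hA hx hm (Ecurve.equation_iff.1 h.1) hy0 hcase
  have hv2P : padicValRat 2 ((x ^ 2 - a) ^ 2 / (4 * y ^ 2)) =
      2 * padicValRat 2 (x ^ 2 - a) - 2 - 2 * padicValRat 2 y := by
    rw [padicValRat.div (pow_ne_zero 2 hm) (by positivity), padicValRat.mul (by norm_num)
      (pow_ne_zero 2 hy0), show (4 : ℚ) = 2 ^ 2 by norm_num, padicValRat_two_pow,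
      padicValRat.pow, padicValRat.pow]
    push_cast; ring
  have hden₁ := padicValNat_den_eq_max (p := 2) x
  have hden₂ := padicValNat_den_eq_max (p := 2) ((x ^ 2 - a) ^ 2 / (4 * y ^ 2))
  change _ ≥ padicValNat 2 x.den + 2
  omega
end
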